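/- Let (X, ‖·‖) be a complex normed space and x, y ∈ X with x, y ≠ 0. Then there exists φ ∈ [0, 2π] such that ⟨e^{i·φ}·x | y⟩ is a real number; consequently the angle ∠(e^{i·φ}·x, y) is pure real. -/

import Mathlib

/-- The real area hyperbolic cosine, `arcosh x = log (x + √(x² − 1))`. -/
noncomputable def arcosh (x : ℝ) : ℝ := Real.log (x + Real.sqrt (x ^ 2 - 1))

/-- `G₋ = √((r²+s²−1)² + 4s²) − (r²+s²)` for `z = r + i·s`. -/
noncomputable def Gminus (z : ℂ) : ℝ :=
  Real.sqrt ((z.re ^ 2 + z.im ^ 2 - 1) ^ 2 + 4 * z.im ^ 2) - (z.re ^ 2 + z.im ^ 2)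

/-- `G₊ = √((r²+s²−1)² + 4s²) + (r²+s²)` for `z = r + i·s`. -/
noncomputable def Gplus (z : ℂ) : ℝ :=
  Real.sqrt ((z.re ^ 2 + z.im ^ 2 - 1) ^ 2 + 4 * z.im ^ 2) + (z.re ^ 2 + z.im ^ 2)

/-- The complex arcsine: `arcsin(r+is) = ½·(sgn r · arccos G₋ + i · sgn s · arcosh G₊)`. -/
noncomputable def carcsin (z : ℂ) : ℂ :=
  (1 / 2 : ℂ) *
    (((Real.sign z.re * Real.arccos (Gminus z) : ℝ) : ℂ) +
      Complex.I * ((Real.sign z.im * arcosh (Gplus z) : ℝ) : ℂ))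

/-- The complex arccosine: `arccos z = π/2 − arcsin z`. -/
noncomputable def carccos (z : ℂ) : ℂ := ((Real.pi / 2 : ℝ) : ℂ) - carcsin z
/-- The continuous product `⟨x|y⟩` in a complex normed space. -/
noncomputable def cprod {X : Type*} [NormedAddCommGroup X] [NormedSpace ℂ X] (x y : X) : ℂ :=
  open scoped Classical in
  if x = 0 ∨ y = 0 then 0
  else
    ((‖x‖ * ‖y‖ : ℝ) : ℂ) * (1 / 4 : ℂ) *
      (((‖((‖x‖⁻¹ : ℝ) : ℂ) • x + ((‖y‖⁻¹ : ℝ) : ℂ) • y‖ ^ 2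
          - ‖((‖x‖⁻¹ : ℝ) : ℂ) • x - ((‖y‖⁻¹ : ℝ) : ℂ) • y‖ ^ 2 : ℝ) : ℂ)
        + Complex.I *
          ((‖((‖x‖⁻¹ : ℝ) : ℂ) • x + Complex.I • (((‖y‖⁻¹ : ℝ) : ℂ) • y)‖ ^ 2
            - ‖((‖x‖⁻¹ : ℝ) : ℂ) • x - Complex.I • (((‖y‖⁻¹ : ℝ) : ℂ) • y)‖ ^ 2 : ℝ) : ℂ))
/-- The complex angle `∠(x,y) = arccos(⟨x|y⟩ / (‖x‖·‖y‖))`. -/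
noncomputable def cangle {X : Type*} [NormedAddCommGroup X] [NormedSpace ℂ X] (x y : X) : ℂ :=
  carccos (cprod x y / ((‖x‖ * ‖y‖ : ℝ) : ℂ))

/-! The function `g φ = Im ⟨e^{iφ}·x | y⟩` is continuous, and `e^{iπ}·x = -x` together with
`⟨-x | y⟩ = -⟨x | y⟩` gives `g π = -g 0`, so `g` vanishes somewhere on `[0, π]` by the
intermediate value theorem. The complex arccosine of a real number is real, so the angle is
then real as well. -/

open Complex

theorem exists_mem_uIcc_eq_zero_of_map_eq_neg {α δ : Type*} [ConditionallyCompleteLinearOrder α]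
    [TopologicalSpace α] [OrderTopology α] [DenselyOrdered α] [AddCommGroup δ] [LinearOrder δ]
    [IsOrderedAddMonoid δ] [TopologicalSpace δ] [OrderClosedTopology δ] {f : α → δ} {a b : α}
    (hf : ContinuousOn f (Set.uIcc a b)) (hab : f b = -f a) : ∃ c ∈ Set.uIcc a b, f c = 0 := by
  have h0 : (0 : δ) ∈ Set.uIcc (f a) (f b) := by
    rw [hab, Set.mem_uIcc]
    rcases le_total (f a) 0 with h | h
    · exact Or.inl ⟨h, neg_nonneg.2 h⟩
    · exact Or.inr ⟨neg_nonpos.2 h, h⟩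
  exact intermediate_value_uIcc hf h0

section cprod

variable {X : Type*} [NormedAddCommGroup X] [NormedSpace ℂ X]

theorem cprod_of_ne_zero {x y : X} (hx : x ≠ 0) (hy : y ≠ 0) :
    cprod x y =
    ((‖x‖ * ‖y‖ : ℝ) : ℂ) * (1 / 4 : ℂ) *
      (((‖((‖x‖⁻¹ : ℝ) : ℂ) • x + ((‖y‖⁻¹ : ℝ) : ℂ) • y‖ ^ 2
          - ‖((‖x‖⁻¹ : ℝ) : ℂ) • x - ((‖y‖⁻¹ : ℝ) : ℂ) • y‖ ^ 2 : ℝ) : ℂ)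
        + I *
          ((‖((‖x‖⁻¹ : ℝ) : ℂ) • x + I • (((‖y‖⁻¹ : ℝ) : ℂ) • y)‖ ^ 2
            - ‖((‖x‖⁻¹ : ℝ) : ℂ) • x - I • (((‖y‖⁻¹ : ℝ) : ℂ) • y)‖ ^ 2 : ℝ) : ℂ)) :=
  if_neg (not_or.2 ⟨hx, hy⟩)

theorem cprod_of_left_or_right_eq_zero {x y : X} (h : x = 0 ∨ y = 0) : cprod x y = 0 :=
  if_pos h

theorem cprod_neg_left (x y : X) : cprod (-x) y = -cprod x y := by
  by_cases h : x = 0 ∨ y = 0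
  · rw [cprod_of_left_or_right_eq_zero h, cprod_of_left_or_right_eq_zero (by simpa using h),
      neg_zero]
  obtain ⟨hx, hy⟩ := not_or.1 h
  rw [cprod_of_ne_zero (neg_ne_zero.2 hx) hy, cprod_of_ne_zero hx hy]
  simp only [norm_neg, smul_neg, neg_add_eq_sub, ← neg_add', norm_neg]
  rw [norm_sub_rev _ (((‖x‖⁻¹ : ℝ) : ℂ) • x), norm_sub_rev _ (((‖x‖⁻¹ : ℝ) : ℂ) • x)]
  push_cast
  ring

theorem continuousAt_cprod {x y : X} (hx : x ≠ 0) (hy : y ≠ 0) :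
    ContinuousAt (fun p : X × X => cprod p.1 p.2) (x, y) := by
  have hnear : ∀ᶠ p : X × X in nhds (x, y), p.1 ≠ 0 ∧ p.2 ≠ 0 :=
    (isOpen_ne.preimage continuous_fst).inter (isOpen_ne.preimage continuous_snd)
      |>.mem_nhds ⟨hx, hy⟩
  refine ContinuousAt.congr ?_ (hnear.mono fun p hp => (cprod_of_ne_zero hp.1 hp.2).symm)
  have hx' : ‖x‖ ≠ 0 := norm_ne_zero_iff.2 hx
  have hy' : ‖y‖ ≠ 0 := norm_ne_zero_iff.2 hy
  fun_prop (disch := assumption)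

theorem continuous_cprod_exp_smul_left (x y : X) :
    Continuous fun φ : ℝ => cprod (exp (I * φ) • x) y := by
  by_cases h : x = 0 ∨ y = 0
  · have hdeg : ∀ φ : ℝ, exp (I * φ) • x = 0 ∨ y = 0 :=
      fun φ => h.imp_left fun hx => by simp [hx]
    simp only [cprod_of_left_or_right_eq_zero (hdeg _)]
    exact continuous_const
  obtain ⟨hx, hy⟩ := not_or.1 h
  refine continuous_iff_continuousAt.2 fun φ => ?_
  exact (continuousAt_cprod (smul_ne_zero (exp_ne_zero _) hx) hy).comp
    (f := fun φ : ℝ => (exp (I * φ) • x, y)) (by fun_prop)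

end cprod

theorem carccos_im_eq_zero {z : ℂ} (hz : z.im = 0) : (carccos z).im = 0 := by
  simp [carccos, carcsin, hz]

theorem cangle_im_eq_zero {X : Type*} [NormedAddCommGroup X] [NormedSpace ℂ X] {x y : X}
    (h : (cprod x y).im = 0) : (cangle x y).im = 0 :=
  carccos_im_eq_zero (by rw [div_ofReal_im, h, zero_div])

theorem stmt15_general {X : Type*} [NormedAddCommGroup X] [NormedSpace ℂ X] (x y : X) :
    ∃ φ ∈ Set.Icc (0 : ℝ) (2 * Real.pi),
      (cprod (Complex.exp (Complex.I * (φ : ℂ)) • x) y).im = 0 ∧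
      (cangle (Complex.exp (Complex.I * (φ : ℂ)) • x) y).im = 0 := by
  set g : ℝ → ℝ := fun φ => (cprod (exp (I * φ) • x) y).im
  have hg : Continuous g := continuous_im.comp (continuous_cprod_exp_smul_left x y)
  have hg_pi : g Real.pi = -g 0 := by
    simp only [g, mul_comm I, exp_pi_mul_I, neg_one_smul, cprod_neg_left, neg_im, ofReal_zero,
      zero_mul, exp_zero, one_smul]
  obtain ⟨φ, hφ, hgφ⟩ := exists_mem_uIcc_eq_zero_of_map_eq_neg hg.continuousOn hg_pi
  rw [Set.uIcc_of_le Real.pi_pos.le] at hφ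
  exact ⟨φ, ⟨hφ.1, hφ.2.trans (by linarith [Real.pi_pos])⟩, hgφ, cangle_im_eq_zero hgφ⟩

/-- for `x, y ≠ 0` there is `φ ∈ [0, 2π]` such that `⟨e^{iφ}·x | y⟩` is real,
and hence the angle `∠(e^{iφ}·x, y)` is pure real. -/
theorem stmt15 {X : Type*} [NormedAddCommGroup X] [NormedSpace ℂ X] (x y : X)
    (hx : x ≠ 0) (hy : y ≠ 0) :
    ∃ φ ∈ Set.Icc (0 : ℝ) (2 * Real.pi),
      (cprod (Complex.exp (Complex.I * (φ : ℂ)) • x) y).im = 0 ∧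
      (cangle (Complex.exp (Complex.I * (φ : ℂ)) • x) y).im = 0 :=
  stmt15_general x y
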